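/- arXiv:math/0410364 — 2 statements merged into one kernel-verified Lean document; each statement's English description precedes it below -/
import Mathlib

section
/- The Hopf algebra dWHA is self-dual with respect to the pairing ⟨(ρ,σ), (ρ',σ')⟩ = 1 if ρ = σ' and ρ' = σ (up to renaming), and 0 otherwise; i.e., ⟨p ⊗ p', μ(p'')⟩ = ⟨m(p ⊗ p'), p''⟩ for all substitutions p, p', p''. -/
open Finsupp

/-- All shuffles of two words (with multiplicity). -/
def shuffles : List ℕ → List ℕ → List (List ℕ)
  | [], t => [t]
  | s, [] => [s]
  | a :: s, b :: t =>
      ((shuffles s (b :: t)).map (a :: ·)) ++ ((shuffles (a :: s) t).map (b :: ·))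

/-- Good cuts of a word: cuts into a prefix and a suffix with disjoint supports. -/
def goodCuts (σ : List ℕ) : List (List ℕ × List ℕ) :=
  ((List.range (σ.length + 1)).map (fun i => (σ.take i, σ.drop i))).filter
    (fun c => c.1.toFinset ∩ c.2.toFinset = ∅)

/-- `invPart ρ τ` : the maximal subword of `ρ` with the support of `τ`, i.e. `p⁻¹(τ)`. -/
def invPart (ρ τ : List ℕ) : List ℕ := ρ.filter (fun a => a ∈ τ)

open Classical in
/-- The pairing on substitutions: `⟨(ρ,σ),(ρ',σ')⟩ = 1` iff, after an injective renaming
`φ` of the letters of the second substitution, `ρ = σ'` and `ρ' = σ`; otherwise `0`. -/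
noncomputable def pairDW (p q : List ℕ × List ℕ) : ℤ :=
  if ∃ φ : ℕ → ℕ, Set.InjOn φ {a | a ∈ q.1} ∧
      q.2.map φ = p.1 ∧ q.1.map φ = p.2 then 1 else 0

/-! Both sides are sums of `0`/`1` terms with at most one nonzero term: on the coproduct side
only the cut of `σ''` after `ρ.length` letters can contribute, on the product side only the
shuffle `ρ''.map ψ`, where `ψ` renames `σ''` to `ρ ++ ρ'`. Each side is therefore `1` exactly
when `IsDualToProduct` holds. For the coproduct, the renamings of the two halves of the cut glue
to a single injective `ψ` because the halves, and their images `ρ` and `ρ'`, have disjoint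
supports. -/

lemma List.sum_map_boole_of_subsingleton {X : Type*} {l : List X} (hl : l.Nodup) (P : X → Prop)
    [DecidablePred P] (huniq : ∀ x ∈ l, ∀ y ∈ l, P x → P y → x = y) :
    (l.map fun x => if P x then (1 : ℤ) else 0).sum = if ∃ x ∈ l, P x then 1 else 0 := by
  induction l with
  | nil => simp
  | cons a l ih =>
    obtain ⟨ha, hl⟩ := List.nodup_cons.mp hl
    have ih' := ih hl fun x hx y hy => huniq x (by simp [hx]) y (by simp [hy])
    by_cases hPa : P a
    · have hrest : ¬ ∃ x ∈ l, P x := fun ⟨x, hx, hPx⟩ =>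
        ha (huniq x (by simp [hx]) a (by simp) hPx hPa ▸ hx)
      simp [hPa, ih', hrest]
    · simp [hPa, ih']

lemma List.subset_of_toFinset_eq {α : Type*} [DecidableEq α] {l₁ l₂ : List α}
    (h : l₁.toFinset = l₂.toFinset) : l₂ ⊆ l₁ :=
  fun _ ha => List.mem_toFinset.mp (h ▸ List.mem_toFinset.mpr ha)

lemma shuffles_nil_right (s : List ℕ) : shuffles s [] = [s] := by
  cases s <;> simp [shuffles]

lemma cons_mem_shuffles_left {a : ℕ} {s t γ : List ℕ} (hγ : γ ∈ shuffles s t) :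
    a :: γ ∈ shuffles (a :: s) t := by
  cases t with
  | nil => simp_all [shuffles_nil_right]
  | cons b t => rw [shuffles]; exact List.mem_append_left _ (List.mem_map_of_mem hγ)

lemma cons_mem_shuffles_right {b : ℕ} {s t γ : List ℕ} (hγ : γ ∈ shuffles s t) :
    b :: γ ∈ shuffles s (b :: t) := by
  cases s with
  | nil => simp_all [shuffles]
  | cons a s => rw [shuffles]; exact List.mem_append_right _ (List.mem_map_of_mem hγ)

lemma mem_shuffles_filter (p : ℕ → Bool) (γ : List ℕ) :
    γ ∈ shuffles (γ.filter p) (γ.filter (!p ·)) := by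
  induction γ with
  | nil => simp [shuffles]
  | cons c γ ih =>
    cases hc : p c
    · simpa [List.filter_cons, hc] using cons_mem_shuffles_right ih
    · simpa [List.filter_cons, hc] using cons_mem_shuffles_left ih

lemma filter_of_mem_shuffles {p : ℕ → Bool} {s t γ : List ℕ} (hs : ∀ a ∈ s, p a)
    (ht : ∀ b ∈ t, ¬ p b) (hγ : γ ∈ shuffles s t) :
    γ.filter p = s ∧ γ.filter (!p ·) = t := by
  induction s, t using shuffles.induct generalizing γ with
  | case1 => simp_all [shuffles]
  | case2 => simp_all [shuffles_nil_right]
  | case3 a s b t ih₁ ih₂ =>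
    simp only [shuffles, List.mem_append, List.mem_map] at hγ
    rcases hγ with ⟨δ, hδ, rfl⟩ | ⟨δ, hδ, rfl⟩
    · have := ih₁ (fun x hx => hs x (by simp [hx])) ht hδ
      simp_all
    · have := ih₂ hs (fun x hx => ht x (by simp [hx])) hδ
      simp_all

lemma nodup_shuffles {s t : List ℕ} (hst : s.Disjoint t) : (shuffles s t).Nodup := by
  induction s, t using shuffles.induct with
  | case1 => simp [shuffles]
  | case2 => simp [shuffles_nil_right]
  | case3 a s b t ih₁ ih₂ =>
    rw [shuffles]
    refine List.Nodup.append ?_ ?_ ?_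
    · exact (ih₁ (List.disjoint_cons_left.mp hst).2).map List.cons_injective
    · exact (ih₂ (List.disjoint_cons_right.mp hst).2).map List.cons_injective
    · simp only [List.Disjoint, List.mem_map]
      rintro _ ⟨δ, -, rfl⟩ ⟨δ', -, hδ'⟩
      exact hst List.mem_cons_self ((List.cons.inj hδ').1 ▸ List.mem_cons_self)

lemma nodup_goodCuts (σ : List ℕ) : (goodCuts σ).Nodup := by
  refine (List.nodup_range.map_on ?_).filter _
  intro i hi j hj hij
  have hlen := congrArg (·.1.length) hij
  simp only [List.length_take] at hlen
  simp only [List.mem_range] at hi hj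
  omega

lemma mem_goodCuts {σ : List ℕ} {c : List ℕ × List ℕ} :
    c ∈ goodCuts σ ↔ (∃ i ≤ σ.length, c = (σ.take i, σ.drop i)) ∧ c.1.Disjoint c.2 := by
  simp only [goodCuts, List.mem_filter, List.mem_map, List.mem_range, Nat.lt_succ_iff,
    decide_eq_true_eq, ← Finset.disjoint_iff_inter_eq_empty, List.disjoint_toFinset_iff_disjoint]
  exact and_congr_left' (exists_congr fun i => and_congr_right' eq_comm)

lemma eq_of_mem_goodCuts {σ : List ℕ} {c c' : List ℕ × List ℕ} (hc : c ∈ goodCuts σ)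
    (hc' : c' ∈ goodCuts σ) (hlen : c.1.length = c'.1.length) : c = c' := by
  obtain ⟨⟨i, hi, rfl⟩, -⟩ := mem_goodCuts.mp hc
  obtain ⟨⟨j, hj, rfl⟩, -⟩ := mem_goodCuts.mp hc'
  obtain rfl : i = j := by simpa [hi, hj] using hlen
  rfl

def IsDual (p q : List ℕ × List ℕ) : Prop :=
  ∃ φ : ℕ → ℕ, Set.InjOn φ {a | a ∈ q.1} ∧ q.2.map φ = p.1 ∧ q.1.map φ = p.2

open Classical in
lemma pairDW_eq_ite (p q : List ℕ × List ℕ) : pairDW p q = if IsDual p q then 1 else 0 := rfl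

lemma IsDual.length_eq {p q : List ℕ × List ℕ} (h : IsDual p q) : q.2.length = p.1.length := by
  obtain ⟨φ, -, hφ, -⟩ := h
  rw [← hφ, List.length_map]

lemma IsDual.snd_eq {r γ γ' ρ σ : List ℕ} (hρσ : ρ ⊆ σ) (h : IsDual (r, γ) (ρ, σ))
    (h' : IsDual (r, γ') (ρ, σ)) : γ = γ' := by
  obtain ⟨φ, -, hφr, rfl⟩ := h
  obtain ⟨φ', -, hφ'r, rfl⟩ := h'
  exact List.map_inj_left.mpr fun a ha => List.map_inj_left.mp (hφr.trans hφ'r.symm) a (hρσ ha)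

lemma invPart_subset (ρ α : List ℕ) : invPart ρ α ⊆ ρ :=
  List.filter_subset_self _

lemma subset_invPart {ρ α : List ℕ} (hα : α ⊆ ρ) : α ⊆ invPart ρ α := fun _ ha =>
  List.mem_filter.mpr ⟨hα ha, decide_eq_true ha⟩

lemma invPart_subset_right (ρ α : List ℕ) : invPart ρ α ⊆ α := fun _ ha =>
  of_decide_eq_true (List.mem_filter.mp ha).2

lemma map_invPart {φ : ℕ → ℕ} {ρ α : List ℕ} (hinj : Set.InjOn φ {a | a ∈ ρ}) (hα : α ⊆ ρ) :
    (invPart ρ α).map φ = (ρ.map φ).filter (· ∈ α.map φ) := by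
  rw [List.filter_map, invPart]
  congr 1
  refine List.filter_congr fun a ha => ?_
  simp only [Function.comp_apply, List.mem_map, decide_eq_decide]
  exact ⟨fun h => ⟨a, h, rfl⟩, fun ⟨x, hx, hxa⟩ => hinj (hα hx) ha hxa ▸ hx⟩

lemma isDual_invPart {ψ : ℕ → ℕ} {ρ'' α r s : List ℕ} (hinj : Set.InjOn ψ {a | a ∈ ρ''})
    (hα : α ⊆ ρ'') (hr : α.map ψ = r) (hs : (ρ''.map ψ).filter (· ∈ r) = s) :
    IsDual (r, s) (invPart ρ'' α, α) := by
  subst hr hs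
  exact ⟨ψ, hinj.mono fun _ => (invPart_subset _ _ ·), rfl, map_invPart hinj hα⟩

open Classical in
lemma sum_goodCuts_pairDW_mul (ρ σ ρ' σ' ρ'' σ'' : List ℕ) :
    ((goodCuts σ'').map (fun c =>
        pairDW (ρ, σ) (invPart ρ'' c.1, c.1) * pairDW (ρ', σ') (invPart ρ'' c.2, c.2))).sum
      = if ∃ c ∈ goodCuts σ'', IsDual (ρ, σ) (invPart ρ'' c.1, c.1) ∧
          IsDual (ρ', σ') (invPart ρ'' c.2, c.2) then 1 else 0 := by
  simp only [pairDW_eq_ite, ite_zero_mul_ite_zero, mul_one]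
  refine List.sum_map_boole_of_subsingleton (nodup_goodCuts σ'') _ ?_
  rintro c hc c' hc' ⟨h₁, -⟩ ⟨h₁', -⟩
  exact eq_of_mem_goodCuts hc hc' (h₁.length_eq.trans h₁'.length_eq.symm)

open Classical in
lemma sum_shuffles_pairDW {σ σ' : List ℕ} (hσσ' : σ.Disjoint σ') (r : List ℕ) {ρ'' σ'' : List ℕ}
    (hρ''σ'' : ρ'' ⊆ σ'') :
    ((shuffles σ σ').map (fun γ => pairDW (r, γ) (ρ'', σ''))).sum
      = if ∃ γ ∈ shuffles σ σ', IsDual (r, γ) (ρ'', σ'') then 1 else 0 := by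
  simp only [pairDW_eq_ite]
  exact List.sum_map_boole_of_subsingleton (nodup_shuffles hσσ') _
    fun _ _ _ _ => IsDual.snd_eq hρ''σ''

lemma exists_injOn_append {α β : List ℕ} (hαβ : α.Disjoint β) {φ₁ φ₂ : ℕ → ℕ}
    (h₁ : Set.InjOn φ₁ {a | a ∈ α}) (h₂ : Set.InjOn φ₂ {a | a ∈ β})
    (himg : (α.map φ₁).Disjoint (β.map φ₂)) :
    ∃ φ : ℕ → ℕ, Set.InjOn φ {a | a ∈ α ++ β} ∧ α.map φ = α.map φ₁ ∧ β.map φ = β.map φ₂ := by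
  classical
  set φ : ℕ → ℕ := fun a => if a ∈ α then φ₁ a else φ₂ a
  have eq₁ : Set.EqOn φ₁ φ {a | a ∈ α} := fun a ha => (if_pos ha).symm
  have eq₂ : Set.EqOn φ₂ φ {a | a ∈ β} := fun a ha => (if_neg fun h => hαβ h ha).symm
  refine ⟨φ, ?_, List.map_congr_left fun _ ha => (eq₁ ha).symm,
    List.map_congr_left fun _ ha => (eq₂ ha).symm⟩
  simp only [List.mem_append, Set.ofPred_or]
  refine (Set.injOn_union (Set.disjoint_left.mpr fun a => @hαβ a)).mpr
    ⟨h₁.congr eq₁, h₂.congr eq₂, fun x hx y hy hxy => ?_⟩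
  rw [← eq₁ hx, ← eq₂ hy] at hxy
  exact himg (List.mem_map_of_mem hx) (hxy ▸ List.mem_map_of_mem hy)

def IsDualToProduct (ρ σ ρ' σ' ρ'' σ'' : List ℕ) : Prop :=
  ∃ ψ : ℕ → ℕ, Set.InjOn ψ {a | a ∈ ρ''} ∧ σ''.map ψ = ρ ++ ρ' ∧
    (ρ''.map ψ).filter (· ∈ ρ) = σ ∧ (ρ''.map ψ).filter (· ∈ ρ') = σ'

section IsDualToProduct

variable {ρ σ ρ' σ' ρ'' σ'' : List ℕ}

lemma exists_goodCut_of_isDualToProduct (hρρ' : ρ.Disjoint ρ') (hσ''ρ'' : σ'' ⊆ ρ'')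
    (hdual : IsDualToProduct ρ σ ρ' σ' ρ'' σ'') :
    ∃ c ∈ goodCuts σ'', IsDual (ρ, σ) (invPart ρ'' c.1, c.1) ∧
      IsDual (ρ', σ') (invPart ρ'' c.2, c.2) := by
  obtain ⟨ψ, hinj, hψ, hσ, hσ'⟩ := hdual
  have hα : (σ''.take ρ.length).map ψ = ρ := by rw [List.map_take, hψ, List.take_left]
  have hβ : (σ''.drop ρ.length).map ψ = ρ' := by rw [List.map_drop, hψ, List.drop_left]
  have hlen : ρ.length ≤ σ''.length := by
    have := congrArg List.length hψ
    simp only [List.length_map, List.length_append] at this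
    omega
  refine ⟨(σ''.take ρ.length, σ''.drop ρ.length), mem_goodCuts.mpr ⟨⟨_, hlen, rfl⟩, ?_⟩,
    isDual_invPart hinj (List.Subset.trans (List.take_subset _ _) hσ''ρ'') hα hσ,
    isDual_invPart hinj (List.Subset.trans (List.drop_subset _ _) hσ''ρ'') hβ hσ'⟩
  exact fun _ hxα hxβ => hρρ' (hα ▸ List.mem_map_of_mem hxα) (hβ ▸ List.mem_map_of_mem hxβ)

lemma isDualToProduct_of_goodCut (hρρ' : ρ.Disjoint ρ') (hρ''σ'' : ρ'' ⊆ σ'')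
    (hσ''ρ'' : σ'' ⊆ ρ'') {c : List ℕ × List ℕ} (hc : c ∈ goodCuts σ'')
    (h₁ : IsDual (ρ, σ) (invPart ρ'' c.1, c.1)) (h₂ : IsDual (ρ', σ') (invPart ρ'' c.2, c.2)) :
    IsDualToProduct ρ σ ρ' σ' ρ'' σ'' := by
  obtain ⟨⟨i, -, rfl⟩, hcut⟩ := mem_goodCuts.mp hc
  obtain ⟨φ₁, hinj₁, hφ₁, hσ⟩ := h₁
  obtain ⟨φ₂, hinj₂, hφ₂, hσ'⟩ := h₂
  dsimp only at *
  have hsplit := List.take_append_drop i σ''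
  have hα : σ''.take i ⊆ ρ'' := List.Subset.trans (List.take_subset _ _) hσ''ρ''
  have hβ : σ''.drop i ⊆ ρ'' := List.Subset.trans (List.drop_subset _ _) hσ''ρ''
  obtain ⟨ψ, hinj, hψα, hψβ⟩ := exists_injOn_append hcut
    (hinj₁.mono fun _ => (subset_invPart hα ·)) (hinj₂.mono fun _ => (subset_invPart hβ ·))
    (hφ₁ ▸ hφ₂ ▸ hρρ')
  rw [hsplit] at hinj
  have hinj'' : Set.InjOn ψ {a | a ∈ ρ''} := hinj.mono fun _ => (hρ''σ'' ·)
  have hfilter {α : List ℕ} {φ : ℕ → ℕ} (hα : α ⊆ ρ'') (hψφ : α.map ψ = α.map φ) :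
      (ρ''.map ψ).filter (· ∈ α.map φ) = (invPart ρ'' α).map φ := by
    rw [← hψφ, ← map_invPart hinj'' hα]
    exact List.map_congr_left fun a ha =>
      List.map_inj_left.mp hψφ a (invPart_subset_right _ _ ha)
  refine ⟨ψ, hinj'', by rw [← hsplit, List.map_append, hψα, hψβ, hφ₁, hφ₂], ?_, ?_⟩
  · rw [← hφ₁, hfilter hα hψα, hσ]
  · rw [← hφ₂, hfilter hβ hψβ, hσ']

lemma exists_goodCut_iff_isDualToProduct (hρρ' : ρ.Disjoint ρ') (hρ''σ'' : ρ'' ⊆ σ'')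
    (hσ''ρ'' : σ'' ⊆ ρ'') :
    (∃ c ∈ goodCuts σ'', IsDual (ρ, σ) (invPart ρ'' c.1, c.1) ∧
      IsDual (ρ', σ') (invPart ρ'' c.2, c.2)) ↔ IsDualToProduct ρ σ ρ' σ' ρ'' σ'' :=
  ⟨fun ⟨_, hc, h₁, h₂⟩ => isDualToProduct_of_goodCut hρρ' hρ''σ'' hσ''ρ'' hc h₁ h₂,
    exists_goodCut_of_isDualToProduct hρρ' hσ''ρ''⟩

lemma mem_shuffles_iff {γ : List ℕ} (hσρ : σ ⊆ ρ) (hσ'ρ' : σ' ⊆ ρ') (hρρ' : ρ.Disjoint ρ')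
    (hγ : γ ⊆ ρ ++ ρ') :
    γ ∈ shuffles σ σ' ↔ γ.filter (· ∈ ρ) = σ ∧ γ.filter (· ∈ ρ') = σ' := by
  have hcompl : γ.filter (fun x => !decide (x ∈ ρ)) = γ.filter (· ∈ ρ') :=
    List.filter_congr fun x hx => by
      rcases List.mem_append.mp (hγ hx) with h | h
      · simpa [h] using fun h' => hρρ' h h'
      · simpa [h] using fun h' => hρρ' h' h
  rw [← hcompl]
  refine ⟨filter_of_mem_shuffles (fun a ha => by simpa using hσρ ha)
    (fun b hb => by simpa using fun h => hρρ' h (hσ'ρ' hb)), ?_⟩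
  rintro ⟨h₁, h₂⟩
  simpa only [h₁, h₂] using mem_shuffles_filter (· ∈ ρ) γ

lemma exists_shuffle_iff_isDualToProduct (hσρ : σ ⊆ ρ) (hσ'ρ' : σ' ⊆ ρ')
    (hρρ' : ρ.Disjoint ρ') (hρ''σ'' : ρ'' ⊆ σ'') :
    (∃ γ ∈ shuffles σ σ', IsDual (ρ ++ ρ', γ) (ρ'', σ'')) ↔
      IsDualToProduct ρ σ ρ' σ' ρ'' σ'' := by
  have hsub : ∀ ψ : ℕ → ℕ, σ''.map ψ = ρ ++ ρ' → ρ''.map ψ ⊆ ρ ++ ρ' := fun ψ hψ =>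
    hψ ▸ List.map_subset ψ hρ''σ''
  constructor
  · rintro ⟨_, hγ, ψ, hinj, hψ, rfl⟩
    exact ⟨ψ, hinj, hψ, (mem_shuffles_iff hσρ hσ'ρ' hρρ' (hsub ψ hψ)).mp hγ⟩
  · rintro ⟨ψ, hinj, hψ, hσ⟩
    exact ⟨_, (mem_shuffles_iff hσρ hσ'ρ' hρρ' (hsub ψ hψ)).mpr hσ, ψ, hinj, hψ, rfl⟩

end IsDualToProduct

/-- Self-duality of `dWHA`: `⟨p ⊗ p', μ(p'')⟩ = ⟨m(p ⊗ p'), p''⟩` for all basis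
substitutions `p = (ρ,σ)`, `p' = (ρ',σ')` (written with disjoint supports) and
`p'' = (ρ'',σ'')`, where `μ` is the good-cut comultiplication and `m` the
concatenation/shuffle multiplication, and the pairing on tensor products is
`⟨p₁⊗p₂, q₁⊗q₂⟩ = ⟨p₁,q₁⟩⟨p₂,q₂⟩`. -/
theorem stmt8 (ρ σ ρ' σ' ρ'' σ'' : List ℕ)
    (h : ρ.toFinset = σ.toFinset) (h' : ρ'.toFinset = σ'.toFinset)
    (h'' : ρ''.toFinset = σ''.toFinset)
    (hd : ρ.toFinset ∩ ρ'.toFinset = ∅) :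
    ((goodCuts σ'').map (fun c =>
        pairDW (ρ, σ) (invPart ρ'' c.1, c.1) *
          pairDW (ρ', σ') (invPart ρ'' c.2, c.2))).sum
      = ((shuffles σ σ').map (fun γ => pairDW (ρ ++ ρ', γ) (ρ'', σ''))).sum := by
  classical
  have hσρ := List.subset_of_toFinset_eq h
  have hσ'ρ' := List.subset_of_toFinset_eq h'
  have hσ''ρ'' := List.subset_of_toFinset_eq h''
  have hρ''σ'' := List.subset_of_toFinset_eq h''.symm
  have hρρ' : ρ.Disjoint ρ' :=
    List.disjoint_toFinset_iff_disjoint.mp (Finset.disjoint_iff_inter_eq_empty.mpr hd)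
  have hσσ' : σ.Disjoint σ' :=
    List.disjoint_of_subset_left hσρ (List.disjoint_of_subset_right hσ'ρ' hρρ')
  rw [sum_goodCuts_pairDW_mul, sum_shuffles_pairDW hσσ' _ hρ''σ'']
  exact if_congr ((exists_goodCut_iff_isDualToProduct hρρ' hρ''σ'' hσ''ρ'').trans
    (exists_shuffle_iff_isDualToProduct hσρ hσ'ρ' hρρ' hρ''σ'').symm) rfl rfl
end

section
/- For descent sets D ⊂ {1,...,m−1} and D' ⊂ {1,...,n−1}, the product of the descent class sums ϑ_D and ϑ_{D'} in (MPR, m') equals ϑ_{D₁} + ϑ_{D₂}, where D₁ = D ∪ (m+D') and D₂ = D ∪ {m} ∪ (m+D') as subsets of {1,...,m+n−1}. -/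
open Finsupp

/-- Standardization of an injective word: each letter is replaced by its rank. -/
def stdz (w : List ℕ) : List ℕ := w.map (fun a => w.countP (fun b => b ≤ a))

/-- The descent set of a word `[s₁,…,sₘ]` : those `i ∈ {1,…,m−1}` with `sᵢ > s_{i+1}`. -/
def descSet (w : List ℕ) : Finset ℕ :=
  (Finset.Ioo 0 w.length).filter (fun i => w.getD i 0 < w.getD (i - 1) 0)

/-- The underlying free abelian group of `MPR`. -/
abbrev MPR : Type := List ℕ →₀ ℤ

/-- Second multiplication of `MPR`: `m'(σ⊗τ) = Σ u*v` over all pairs `(u,v)` with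
`st(u) = σ`, `st(v) = τ` and `supp(u) ∪ supp(v) = {1,…,m+n}`. -/
noncomputable def mulMPR' (σ τ : List ℕ) : MPR :=
  (((List.range' 1 (σ.length + τ.length)).permutations.filter
      (fun w => stdz (w.take σ.length) = σ ∧ stdz (w.drop σ.length) = τ)).map
    (fun w => Finsupp.single w (1 : ℤ))).sum

/-- Bilinear extension of `m'` to `MPR`. -/
noncomputable def mulE (x y : MPR) : MPR :=
  x.sum fun σ c => y.sum fun τ d => (c * d) • mulMPR' σ τ

/-- The descent class sum `ϑ_D` : the sum of all permutation words of `{1,…,m}`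
with descent set `D`. -/
noncomputable def theta (m : ℕ) (D : Finset ℕ) : MPR :=
  (((List.range' 1 m).permutations.filter (fun w => descSet w = D)).map
    (fun w => Finsupp.single w (1 : ℤ))).sum

/-!
A permutation word `w` of `{1,…,m+n}` occurs in `m'(σ ⊗ τ)` exactly for `σ = st(w₁⋯wₘ)` and
`τ = st(wₘ₊₁⋯wₘ₊ₙ)`, and standardization preserves descent sets since the rank map is strictly
monotone. Away from the junction position `m`, the descents of `w` are those of its prefix
together with `m +` those of its suffix, and `m` lies neither in `D` nor in `m + D'`. Hence the
prefix and suffix of `w` have descent sets `D` and `D'` iff `desc(w)` is `D₁` or `D₂ = D₁ ∪ {m}`.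
-/

open Finset

lemma countP_le_eq_add (u : List ℕ) {a b : ℕ} (hab : a ≤ b) :
    u.countP (· ≤ b) = u.countP (· ≤ a) + u.countP (fun x => a < x ∧ x ≤ b) := by
  induction u with
  | nil => simp
  | cons x u ih =>
    simp only [List.countP_cons, ih]
    split_ifs <;> simp_all <;> omega

lemma strictMonoOn_countP_le (u : List ℕ) :
    StrictMonoOn (fun a => u.countP (· ≤ a)) {a | a ∈ u} := by
  intro a _ b hb hab
  have hpos : 0 < u.countP (fun x => a < x ∧ x ≤ b) :=
    List.countP_pos_iff.2 ⟨b, hb, by simp [hab]⟩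
  simp only [countP_le_eq_add u hab.le]
  omega

lemma length_stdz (u : List ℕ) : (stdz u).length = u.length := List.length_map _

lemma getD_stdz (u : List ℕ) {i : ℕ} (hi : i < u.length) :
    (stdz u).getD i 0 = u.countP (· ≤ u.getD i 0) := by
  simp [stdz, List.getElem?_eq_getElem hi]

lemma descSet_stdz (u : List ℕ) : descSet (stdz u) = descSet u := by
  rw [descSet, descSet, length_stdz]
  refine filter_congr fun i hi => ?_
  have hi : i < u.length := (mem_Ioo.1 hi).2
  have hi' : i - 1 < u.length := by omega
  rw [getD_stdz u hi, getD_stdz u hi']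
  refine (strictMonoOn_countP_le u).lt_iff_lt ?_ ?_ <;> simp [hi, hi']

lemma stdz_perm {u : List ℕ} (hu : u.Nodup) : (stdz u).Perm (List.range' 1 u.length) := by
  have hnd : (stdz u).Nodup :=
    hu.map_on fun x hx y hy h => (strictMonoOn_countP_le u).injOn hx hy h
  refine (hnd.subperm fun r hr => ?_).perm_of_length_le (by simp [length_stdz])
  obtain ⟨a, ha, rfl⟩ := List.mem_map.1 hr
  have hpos : 0 < u.countP (· ≤ a) := List.countP_pos_iff.2 ⟨a, ha, by simp⟩
  have hle : u.countP (· ≤ a) ≤ u.length := List.countP_le_length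
  rw [List.mem_range'_1]
  omega

def permWords (k : ℕ) : Finset (List ℕ) := (List.range' 1 k).permutations.toFinset

def descClass (k : ℕ) (D : Finset ℕ) : Finset (List ℕ) := {w ∈ permWords k | descSet w = D}

lemma mem_permWords {k : ℕ} {w : List ℕ} : w ∈ permWords k ↔ w.Perm (List.range' 1 k) := by
  simp [permWords]

lemma length_of_mem_descClass {k : ℕ} {D : Finset ℕ} {w : List ℕ} (hw : w ∈ descClass k D) :
    w.length = k := by
  simpa using (mem_permWords.1 (mem_filter.1 hw).1).length_eq

lemma stdz_mem_descClass_iff {u : List ℕ} {k : ℕ} (hu : u.Nodup) (hk : u.length = k)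
    (D : Finset ℕ) : stdz u ∈ descClass k D ↔ descSet u = D := by
  subst hk
  simp [descClass, mem_permWords, stdz_perm hu, descSet_stdz]

lemma sum_map_filter_of_nodup {α M : Type*} [DecidableEq α] [AddCommMonoid M] {l : List α}
    (hl : l.Nodup) (p : α → Bool) (f : α → M) :
    ((l.filter p).map f).sum = ∑ x ∈ l.toFinset with p x, f x := by
  rw [← List.sum_toFinset _ (hl.filter p), List.toFinset_filter]

lemma nodup_permutations_range' (k : ℕ) : (List.range' 1 k).permutations.Nodup :=
  List.nodup_permutations _ List.nodup_range'

lemma theta_eq_sum (k : ℕ) (D : Finset ℕ) : theta k D = ∑ w ∈ descClass k D, single w 1 := by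
  rw [theta, sum_map_filter_of_nodup (nodup_permutations_range' k)]
  simp [descClass, permWords]

lemma mulMPR'_eq_sum (σ τ : List ℕ) :
    mulMPR' σ τ = ∑ w ∈ permWords (σ.length + τ.length) with
      (stdz (w.take σ.length), stdz (w.drop σ.length)) = (σ, τ), single w 1 := by
  rw [mulMPR', sum_map_filter_of_nodup (nodup_permutations_range' _)]
  simp [permWords]

lemma mulE_sum_single (A B : Finset (List ℕ)) :
    mulE (∑ σ ∈ A, single σ 1) (∑ τ ∈ B, single τ 1) = ∑ σ ∈ A, ∑ τ ∈ B, mulMPR' σ τ := by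
  unfold mulE
  rw [← sum_finsetSum_index]
  · refine Finset.sum_congr rfl fun σ _ => ?_
    rw [sum_single_index, ← sum_finsetSum_index]
    · simp
    · simp
    · simp [add_smul]
    · simp
  · simp
  · intro σ c₁ c₂
    simp [add_mul, add_smul, Finsupp.sum_add]

lemma sum_sum_mulMPR' {m n : ℕ} {A B : Finset (List ℕ)} (hA : ∀ σ ∈ A, σ.length = m)
    (hB : ∀ τ ∈ B, τ.length = n) :
    ∑ σ ∈ A, ∑ τ ∈ B, mulMPR' σ τ
      = ∑ w ∈ permWords (m + n) with (stdz (w.take m) ∈ A ∧ stdz (w.drop m) ∈ B), single w 1 := by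
  set g : List ℕ → List ℕ × List ℕ := fun w => (stdz (w.take m), stdz (w.drop m))
  have hfilter : {w ∈ permWords (m + n) | stdz (w.take m) ∈ A ∧ stdz (w.drop m) ∈ B}
      = {w ∈ permWords (m + n) | g w ∈ A ×ˢ B} := by
    simp [g, mem_product]
  rw [hfilter, ← sum_fiberwise_of_maps_to (fun w hw => (mem_filter.1 hw).2), ← sum_product']
  refine Finset.sum_congr rfl fun p hp => ?_
  rw [mulMPR'_eq_sum, hA _ (mem_product.1 hp).1, hB _ (mem_product.1 hp).2, filter_filter]
  exact Finset.sum_congr (filter_congr fun w _ => ⟨fun h => ⟨(show g w = p from h) ▸ hp, h⟩, And.right⟩)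
    fun _ _ => rfl

lemma mem_descSet {w : List ℕ} {i : ℕ} :
    i ∈ descSet w ↔ 0 < i ∧ i < w.length ∧ w.getD i 0 < w.getD (i - 1) 0 := by
  simp [descSet, and_assoc]

lemma erase_descSet (w : List ℕ) (m : ℕ) :
    (descSet w).erase m = descSet (w.take m) ∪ (descSet (w.drop m)).image (m + ·) := by
  ext i
  simp only [mem_erase, mem_union, mem_image, mem_descSet, List.length_take, List.length_drop,
    List.getD_eq_getElem?_getD, List.getElem?_take, List.getElem?_drop]
  constructor
  · rintro ⟨him, hi0, hil, hdesc⟩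
    rcases lt_or_gt_of_ne him with h | h
    · left
      refine ⟨hi0, by omega, ?_⟩
      rwa [if_pos h, if_pos (by omega)]
    · right
      refine ⟨i - m, ⟨by omega, by omega, ?_⟩, by omega⟩
      rwa [show m + (i - m) = i by omega, show m + (i - m - 1) = i - 1 by omega]
  · rintro (⟨hi0, hil, hdesc⟩ | ⟨j, ⟨hj0, hjl, hdesc⟩, rfl⟩)
    · rw [if_pos (by omega), if_pos (by omega)] at hdesc
      exact ⟨by omega, hi0, by omega, hdesc⟩
    · rw [show m + (j - 1) = m + j - 1 by omega] at hdesc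
      exact ⟨by omega, by omega, by omega, hdesc⟩

lemma mem_union_image_add_left {m a : ℕ} {A B : Finset ℕ} (hA : ∀ a ∈ A, a < m) :
    a ∈ A ↔ a < m ∧ a ∈ A ∪ B.image (m + ·) := by
  simp only [mem_union, mem_image]
  constructor
  · exact fun ha => ⟨hA a ha, .inl ha⟩
  · rintro ⟨ham, ha | ⟨b, -, rfl⟩⟩
    exacts [ha, absurd ham (by omega)]

lemma mem_union_image_add_right {m b : ℕ} {A B : Finset ℕ} (hA : ∀ a ∈ A, a < m) :
    b ∈ B ↔ m + b ∈ A ∪ B.image (m + ·) := by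
  simp only [mem_union, mem_image, add_right_inj, exists_eq_right, iff_or_self]
  exact fun h => absurd (hA _ h) (by omega)

lemma union_image_add_eq_iff {m : ℕ} {A B C E : Finset ℕ} (hA : ∀ a ∈ A, a < m)
    (hC : ∀ c ∈ C, c < m) :
    A ∪ B.image (m + ·) = C ∪ E.image (m + ·) ↔ A = C ∧ B = E := by
  refine ⟨fun h => ⟨?_, ?_⟩, fun h => h.1 ▸ h.2 ▸ rfl⟩ <;> ext x
  · rw [mem_union_image_add_left (B := B) hA, mem_union_image_add_left (B := E) hC, h]
  · rw [mem_union_image_add_right (B := B) hA, mem_union_image_add_right (B := E) hC, h]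

lemma notMem_union_image_add {m : ℕ} {A B : Finset ℕ} (hA : ∀ a ∈ A, a < m)
    (hB : ∀ b ∈ B, 0 < b) : m ∉ A ∪ B.image (m + ·) := by
  simp only [mem_union, mem_image, not_or, not_exists, not_and]
  exact ⟨fun h => (hA m h).false, fun b hb h => (hB b hb).ne' (by omega)⟩

lemma eq_or_eq_insert_iff_erase_eq {α : Type*} [DecidableEq α] {s t : Finset α} {a : α}
    (ha : a ∉ t) : s = t ∨ s = insert a t ↔ s.erase a = t := by
  constructor
  · rintro (rfl | rfl)
    exacts [erase_eq_of_notMem ha, erase_insert ha]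
  · intro h
    by_cases has : a ∈ s
    · exact .inr (h ▸ (insert_erase has).symm)
    · exact .inl (h ▸ (erase_eq_of_notMem has).symm)

lemma descSet_take_drop_iff (w : List ℕ) {m : ℕ} {D D' : Finset ℕ} (hD : ∀ d ∈ D, d < m)
    (hD' : ∀ d ∈ D', 0 < d) :
    (descSet (w.take m) = D ∧ descSet (w.drop m) = D') ↔
      (descSet w = D ∪ D'.image (m + ·) ∨ descSet w = insert m (D ∪ D'.image (m + ·))) := by
  have htake : ∀ a ∈ descSet (w.take m), a < m := fun a ha =>
    lt_of_lt_of_le (mem_descSet.1 ha).2.1 (List.length_take_le _ _)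
  rw [eq_or_eq_insert_iff_erase_eq (notMem_union_image_add hD hD'), erase_descSet,
    union_image_add_eq_iff htake hD]

theorem stmt11_general (m n : ℕ) (D D' : Finset ℕ)
    (hD : D ⊆ Finset.Ioo 0 m) (hD' : D' ⊆ Finset.Ioo 0 n) :
    mulE (theta m D) (theta n D')
      = theta (m + n) (D ∪ D'.image (m + ·))
        + theta (m + n) (insert m (D ∪ D'.image (m + ·))) := by
  set D₁ := D ∪ D'.image (m + ·)
  have hD_lt : ∀ d ∈ D, d < m := fun d hd => (mem_Ioo.1 (hD hd)).2
  have hD'_pos : ∀ d ∈ D', 0 < d := fun d hd => (mem_Ioo.1 (hD' hd)).1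
  have hdisj : Disjoint (descClass (m + n) D₁) (descClass (m + n) (insert m D₁)) :=
    disjoint_filter.2 fun _ _ h₁ h₂ =>
      insert_ne_self.2 (notMem_union_image_add hD_lt hD'_pos) (h₂.symm.trans h₁)
  have hunion : descClass (m + n) D₁ ∪ descClass (m + n) (insert m D₁)
      = {w ∈ permWords (m + n) | descSet w = D₁ ∨ descSet w = insert m D₁} :=
    (filter_or _ _ _).symm
  rw [theta_eq_sum, theta_eq_sum, theta_eq_sum, theta_eq_sum, mulE_sum_single,
    sum_sum_mulMPR' (fun _ => length_of_mem_descClass) (fun _ => length_of_mem_descClass),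
    ← sum_union hdisj, hunion]
  refine Finset.sum_congr (filter_congr fun w hw => ?_) fun _ _ => rfl
  have hwnd : w.Nodup := (mem_permWords.1 hw).nodup_iff.2 List.nodup_range'
  have hwlen : w.length = m + n := by simpa using (mem_permWords.1 hw).length_eq
  rw [stdz_mem_descClass_iff (hwnd.sublist (List.take_sublist _ _)) (by simp; omega),
    stdz_mem_descClass_iff (hwnd.sublist (List.drop_sublist _ _)) (by simp; omega),
    descSet_take_drop_iff w hD_lt hD'_pos]

/-- In `(MPR, m')`, `ϑ_D · ϑ_{D'} = ϑ_{D₁} + ϑ_{D₂}` where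
`D₁ = D ∪ (m + D')` and `D₂ = D ∪ {m} ∪ (m + D')`. -/
theorem stmt11 (m n : ℕ) (hm : 0 < m) (hn : 0 < n) (D D' : Finset ℕ)
    (hD : D ⊆ Finset.Ioo 0 m) (hD' : D' ⊆ Finset.Ioo 0 n) :
    mulE (theta m D) (theta n D')
      = theta (m + n) (D ∪ D'.image (m + ·))
        + theta (m + n) (insert m (D ∪ D'.image (m + ·))) :=
  stmt11_general m n D D' hD hD'
end
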